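/- arXiv:2604.25852 — 3 statements merged into one kernel-verified Lean document; each statement's English description precedes it below -/
import Mathlib

section
/- Let G(x,y,τ) be the time-domain fundamental solution of the Smoluchowski shear equation with Pe = 1. Then for every fixed y ∈ ℝ³, every x ∈ ℝ³ and every τ > 0, the function (x,τ) ↦ G(x,y,τ) satisfies the partial differential equation ∂_τ G(x,y,τ) − Δ_x G(x,y,τ) + ∂_{x₁}( x₂ · G(x,y,τ) ) = 0. -/
open Real MeasureTheory

/-- `p(x,y,τ)²` for the Smoluchowski shear fundamental solution. -/
noncomputable def psq (x y : Fin 3 → ℝ) (τ : ℝ) : ℝ :=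
  (x 0 - y 0 - τ * (x 1 + y 1) / 2) ^ 2 / (1 + τ ^ 2 / 12)
    + (x 1 - y 1) ^ 2 + (x 2 - y 2) ^ 2

/-- Time-domain fundamental solution of the Smoluchowski shear equation with
Péclet number `Pe`. -/
noncomputable def G (Pe : ℝ) (x y : Fin 3 → ℝ) (τ : ℝ) : ℝ :=
  (4 * Real.pi * τ) ^ (-(3 : ℝ) / 2) * (1 + τ ^ 2 / 12) ^ (-(1 : ℝ) / 2) *
    Real.exp (-(Pe * psq x y τ) / (4 * τ))

/-- Partial derivative in the `i`-th coordinate. -/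
noncomputable def pd (i : Fin 3) (f : (Fin 3 → ℝ) → ℝ) (x : Fin 3 → ℝ) : ℝ :=
  deriv (fun s => f (Function.update x i s)) (x i)

lemma hq1 (A a2 a1 a0 : ℝ) (s : ℝ) :
    HasDerivAt (fun t => A * Real.exp (a2*t^2 + a1*t + a0))
      (A * Real.exp (a2*s^2 + a1*s + a0) * (2*a2*s + a1)) s := by
  have hp : HasDerivAt (fun t : ℝ => a2*t^2 + a1*t + a0) (2*a2*s + a1) s := by
    have h1 : HasDerivAt (fun t : ℝ => t^2) (2*s) s := by simpa using hasDerivAt_pow 2 s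
    have := ((h1.const_mul a2).add ((hasDerivAt_id s).const_mul a1)).add_const a0
    exact this.congr_deriv (by ring)
  have := hp.exp.const_mul A
  exact this.congr_deriv (by ring)

lemma hq2 (A a2 a1 a0 : ℝ) (s : ℝ) :
    HasDerivAt (fun t => A * Real.exp (a2*t^2 + a1*t + a0) * (2*a2*t + a1))
      (A * Real.exp (a2*s^2+a1*s+a0) * ((2*a2*s+a1)^2 + 2*a2)) s := by
  have h2 : HasDerivAt (fun t : ℝ => 2*a2*t + a1) (2*a2) s := by
    simpa using ((hasDerivAt_id s).const_mul (2*a2)).add_const a1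
  have := (hq1 A a2 a1 a0 s).mul h2
  exact this.congr_deriv (by ring)

lemma pd_pd (f : (Fin 3 → ℝ) → ℝ) (i : Fin 3) (x : Fin 3 → ℝ) :
    pd i (fun z => pd i f z) x
      = deriv (fun s => deriv (fun t => f (Function.update x i t)) s) (x i) := by
  unfold pd
  congr 1
  funext s
  simp [Function.update_idem]

set_option maxHeartbeats 2000000 in
/-- The time-domain fundamental solution with `Pe = 1` satisfies
`∂_τ G − Δ_x G + ∂_{x₁}(x₂ G) = 0` for every fixed `y`, all `x` and all `τ > 0`. -/
theorem smoluchowski_fundamental_solution_satisfies_pde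
    (y x : Fin 3 → ℝ) (τ : ℝ) (hτ : 0 < τ) :
    deriv (fun s => G 1 x y s) τ
      - (∑ i : Fin 3, pd i (fun z => pd i (fun w => G 1 w y τ) z) x)
      + pd 0 (fun z => z 1 * G 1 z y τ) x = 0 := by
  have hτ' : τ ≠ 0 := ne_of_gt hτ
  have hD0 : (0:ℝ) < 1 + τ^2/12 := by positivity
  have hD : (1:ℝ) + τ^2/12 ≠ 0 := ne_of_gt hD0
  have h4πτ : (0:ℝ) < 4 * Real.pi * τ := by positivity
  have H0 : (fun t => G 1 (Function.update x 0 t) y τ)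
      = fun t => ((4 * Real.pi * τ) ^ (-(3 : ℝ) / 2) * (1 + τ ^ 2 / 12) ^ (-(1 : ℝ) / 2)) * Real.exp ((-(1/(4*τ*(1 + τ^2/12))))*t^2 + ((y 0 + τ*(x 1 + y 1)/2)/(2*τ*(1 + τ^2/12)))*t + (-(((y 0 + τ*(x 1 + y 1)/2)^2/(1 + τ^2/12) + (x 1 - y 1)^2 + (x 2 - y 2)^2)/(4*τ)))) := by
    funext t
    have v0 : Function.update x 0 t 0 = t := Function.update_self _ _ _
    have v1 : Function.update x 0 t 1 = x 1 := Function.update_of_ne (by decide) _ _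
    have v2 : Function.update x 0 t 2 = x 2 := Function.update_of_ne (by decide) _ _
    simp only [G, psq, v0, v1, v2]
    congr 2
    field_simp
    ring
  have hv0 : (-(1/(4*τ*(1 + τ^2/12))))*(x 0)^2 + ((y 0 + τ*(x 1 + y 1)/2)/(2*τ*(1 + τ^2/12)))*(x 0) + (-(((y 0 + τ*(x 1 + y 1)/2)^2/(1 + τ^2/12) + (x 1 - y 1)^2 + (x 2 - y 2)^2)/(4*τ))) = -(1 * psq x y τ) / (4 * τ) := by
    simp only [psq]
    field_simp
    ring
  have hLap0 : pd 0 (fun z => pd 0 (fun w => G 1 w y τ) z) x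
      = ((4 * Real.pi * τ) ^ (-(3 : ℝ) / 2) * (1 + τ ^ 2 / 12) ^ (-(1 : ℝ) / 2)) * Real.exp (-(1 * psq x y τ) / (4 * τ)) * ((2*(-(1/(4*τ*(1 + τ^2/12))))*(x 0) + ((y 0 + τ*(x 1 + y 1)/2)/(2*τ*(1 + τ^2/12))))^2 + 2*(-(1/(4*τ*(1 + τ^2/12))))) := by
    rw [pd_pd]
    simp only [H0]
    have hd : deriv (fun t => ((4 * Real.pi * τ) ^ (-(3 : ℝ) / 2) * (1 + τ ^ 2 / 12) ^ (-(1 : ℝ) / 2)) * Real.exp ((-(1/(4*τ*(1 + τ^2/12))))*t^2 + ((y 0 + τ*(x 1 + y 1)/2)/(2*τ*(1 + τ^2/12)))*t + (-(((y 0 + τ*(x 1 + y 1)/2)^2/(1 + τ^2/12) + (x 1 - y 1)^2 + (x 2 - y 2)^2)/(4*τ)))))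
        = fun s => ((4 * Real.pi * τ) ^ (-(3 : ℝ) / 2) * (1 + τ ^ 2 / 12) ^ (-(1 : ℝ) / 2)) * Real.exp ((-(1/(4*τ*(1 + τ^2/12))))*s^2 + ((y 0 + τ*(x 1 + y 1)/2)/(2*τ*(1 + τ^2/12)))*s + (-(((y 0 + τ*(x 1 + y 1)/2)^2/(1 + τ^2/12) + (x 1 - y 1)^2 + (x 2 - y 2)^2)/(4*τ)))) * (2*(-(1/(4*τ*(1 + τ^2/12))))*s + ((y 0 + τ*(x 1 + y 1)/2)/(2*τ*(1 + τ^2/12)))) :=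
      funext fun s => (hq1 _ _ _ _ s).deriv
    simp only [hd]
    rw [(hq2 ((4 * Real.pi * τ) ^ (-(3 : ℝ) / 2) * (1 + τ ^ 2 / 12) ^ (-(1 : ℝ) / 2)) (-(1/(4*τ*(1 + τ^2/12)))) ((y 0 + τ*(x 1 + y 1)/2)/(2*τ*(1 + τ^2/12))) (-(((y 0 + τ*(x 1 + y 1)/2)^2/(1 + τ^2/12) + (x 1 - y 1)^2 + (x 2 - y 2)^2)/(4*τ))) (x 0)).deriv, hv0]
  have H1 : (fun t => G 1 (Function.update x 1 t) y τ)
      = fun t => ((4 * Real.pi * τ) ^ (-(3 : ℝ) / 2) * (1 + τ ^ 2 / 12) ^ (-(1 : ℝ) / 2)) * Real.exp ((-(τ/(16*(1 + τ^2/12))) - 1/(4*τ))*t^2 + ((x 0 - y 0 - τ*(y 1)/2)/(4*(1 + τ^2/12)) + (y 1)/(2*τ))*t + (-((x 0 - y 0 - τ*(y 1)/2)^2/(4*τ*(1 + τ^2/12))) - ((y 1)^2 + (x 2 - y 2)^2)/(4*τ))) := by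
    funext t
    have v1 : Function.update x 1 t 1 = t := Function.update_self _ _ _
    have v0 : Function.update x 1 t 0 = x 0 := Function.update_of_ne (by decide) _ _
    have v2 : Function.update x 1 t 2 = x 2 := Function.update_of_ne (by decide) _ _
    simp only [G, psq, v0, v1, v2]
    congr 2
    field_simp
    ring
  have hv1 : (-(τ/(16*(1 + τ^2/12))) - 1/(4*τ))*(x 1)^2 + ((x 0 - y 0 - τ*(y 1)/2)/(4*(1 + τ^2/12)) + (y 1)/(2*τ))*(x 1) + (-((x 0 - y 0 - τ*(y 1)/2)^2/(4*τ*(1 + τ^2/12))) - ((y 1)^2 + (x 2 - y 2)^2)/(4*τ)) = -(1 * psq x y τ) / (4 * τ) := by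
    simp only [psq]
    field_simp
    ring
  have hLap1 : pd 1 (fun z => pd 1 (fun w => G 1 w y τ) z) x
      = ((4 * Real.pi * τ) ^ (-(3 : ℝ) / 2) * (1 + τ ^ 2 / 12) ^ (-(1 : ℝ) / 2)) * Real.exp (-(1 * psq x y τ) / (4 * τ)) * ((2*(-(τ/(16*(1 + τ^2/12))) - 1/(4*τ))*(x 1) + ((x 0 - y 0 - τ*(y 1)/2)/(4*(1 + τ^2/12)) + (y 1)/(2*τ)))^2 + 2*(-(τ/(16*(1 + τ^2/12))) - 1/(4*τ))) := by
    rw [pd_pd]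
    simp only [H1]
    have hd : deriv (fun t => ((4 * Real.pi * τ) ^ (-(3 : ℝ) / 2) * (1 + τ ^ 2 / 12) ^ (-(1 : ℝ) / 2)) * Real.exp ((-(τ/(16*(1 + τ^2/12))) - 1/(4*τ))*t^2 + ((x 0 - y 0 - τ*(y 1)/2)/(4*(1 + τ^2/12)) + (y 1)/(2*τ))*t + (-((x 0 - y 0 - τ*(y 1)/2)^2/(4*τ*(1 + τ^2/12))) - ((y 1)^2 + (x 2 - y 2)^2)/(4*τ))))
        = fun s => ((4 * Real.pi * τ) ^ (-(3 : ℝ) / 2) * (1 + τ ^ 2 / 12) ^ (-(1 : ℝ) / 2)) * Real.exp ((-(τ/(16*(1 + τ^2/12))) - 1/(4*τ))*s^2 + ((x 0 - y 0 - τ*(y 1)/2)/(4*(1 + τ^2/12)) + (y 1)/(2*τ))*s + (-((x 0 - y 0 - τ*(y 1)/2)^2/(4*τ*(1 + τ^2/12))) - ((y 1)^2 + (x 2 - y 2)^2)/(4*τ))) * (2*(-(τ/(16*(1 + τ^2/12))) - 1/(4*τ))*s + ((x 0 - y 0 - τ*(y 1)/2)/(4*(1 + τ^2/12)) + (y 1)/(2*τ)))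 :=
      funext fun s => (hq1 _ _ _ _ s).deriv
    simp only [hd]
    rw [(hq2 ((4 * Real.pi * τ) ^ (-(3 : ℝ) / 2) * (1 + τ ^ 2 / 12) ^ (-(1 : ℝ) / 2)) (-(τ/(16*(1 + τ^2/12))) - 1/(4*τ)) ((x 0 - y 0 - τ*(y 1)/2)/(4*(1 + τ^2/12)) + (y 1)/(2*τ)) (-((x 0 - y 0 - τ*(y 1)/2)^2/(4*τ*(1 + τ^2/12))) - ((y 1)^2 + (x 2 - y 2)^2)/(4*τ)) (x 1)).deriv, hv1]
  have H2 : (fun t => G 1 (Function.update x 2 t) y τ)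
      = fun t => ((4 * Real.pi * τ) ^ (-(3 : ℝ) / 2) * (1 + τ ^ 2 / 12) ^ (-(1 : ℝ) / 2)) * Real.exp ((-(1/(4*τ)))*t^2 + ((y 2)/(2*τ))*t + (-(((x 0 - y 0 - τ*(x 1 + y 1)/2)^2/(1 + τ^2/12) + (x 1 - y 1)^2 + (y 2)^2)/(4*τ)))) := by
    funext t
    have v2 : Function.update x 2 t 2 = t := Function.update_self _ _ _
    have v0 : Function.update x 2 t 0 = x 0 := Function.update_of_ne (by decide) _ _
    have v1 : Function.update x 2 t 1 = x 1 := Function.update_of_ne (by decide) _ _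
    simp only [G, psq, v0, v1, v2]
    congr 2
    field_simp
    ring
  have hv2 : (-(1/(4*τ)))*(x 2)^2 + ((y 2)/(2*τ))*(x 2) + (-(((x 0 - y 0 - τ*(x 1 + y 1)/2)^2/(1 + τ^2/12) + (x 1 - y 1)^2 + (y 2)^2)/(4*τ))) = -(1 * psq x y τ) / (4 * τ) := by
    simp only [psq]
    field_simp
    ring
  have hLap2 : pd 2 (fun z => pd 2 (fun w => G 1 w y τ) z) x
      = ((4 * Real.pi * τ) ^ (-(3 : ℝ) / 2) * (1 + τ ^ 2 / 12) ^ (-(1 : ℝ) / 2)) * Real.exp (-(1 * psq x y τ) / (4 * τ)) * ((2*(-(1/(4*τ)))*(x 2) + ((y 2)/(2*τ)))^2 + 2*(-(1/(4*τ)))) := by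
    rw [pd_pd]
    simp only [H2]
    have hd : deriv (fun t => ((4 * Real.pi * τ) ^ (-(3 : ℝ) / 2) * (1 + τ ^ 2 / 12) ^ (-(1 : ℝ) / 2)) * Real.exp ((-(1/(4*τ)))*t^2 + ((y 2)/(2*τ))*t + (-(((x 0 - y 0 - τ*(x 1 + y 1)/2)^2/(1 + τ^2/12) + (x 1 - y 1)^2 + (y 2)^2)/(4*τ)))))
        = fun s => ((4 * Real.pi * τ) ^ (-(3 : ℝ) / 2) * (1 + τ ^ 2 / 12) ^ (-(1 : ℝ) / 2)) * Real.exp ((-(1/(4*τ)))*s^2 + ((y 2)/(2*τ))*s + (-(((x 0 - y 0 - τ*(x 1 + y 1)/2)^2/(1 + τ^2/12) + (x 1 - y 1)^2 + (y 2)^2)/(4*τ)))) * (2*(-(1/(4*τ)))*s + ((y 2)/(2*τ))) :=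
      funext fun s => (hq1 _ _ _ _ s).deriv
    simp only [hd]
    rw [(hq2 ((4 * Real.pi * τ) ^ (-(3 : ℝ) / 2) * (1 + τ ^ 2 / 12) ^ (-(1 : ℝ) / 2)) (-(1/(4*τ))) ((y 2)/(2*τ)) (-(((x 0 - y 0 - τ*(x 1 + y 1)/2)^2/(1 + τ^2/12) + (x 1 - y 1)^2 + (y 2)^2)/(4*τ))) (x 2)).deriv, hv2]
  have Hadv : (fun t => Function.update x 0 t 1 * G 1 (Function.update x 0 t) y τ)
      = fun t => (x 1 * ((4 * Real.pi * τ) ^ (-(3 : ℝ) / 2) * (1 + τ ^ 2 / 12) ^ (-(1 : ℝ) / 2))) * Real.exp ((-(1/(4*τ*(1 + τ^2/12))))*t^2 + ((y 0 + τ*(x 1 + y 1)/2)/(2*τ*(1 + τ^2/12)))*t + (-(((y 0 + τ*(x 1 + y 1)/2)^2/(1 + τ^2/12) + (x 1 - y 1)^2 + (x 2 - y 2)^2)/(4*τ)))) := by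
    funext t
    have u0 : Function.update x 0 t 0 = t := Function.update_self _ _ _
    have u1 : Function.update x 0 t 1 = x 1 := Function.update_of_ne (by decide) _ _
    have u2 : Function.update x 0 t 2 = x 2 := Function.update_of_ne (by decide) _ _
    simp only [G, psq, u0, u1, u2]
    rw [← mul_assoc]
    congr 2
    field_simp
    ring
  have hAdv : pd 0 (fun z => z 1 * G 1 z y τ) x
      = (x 1 * ((4 * Real.pi * τ) ^ (-(3 : ℝ) / 2) * (1 + τ ^ 2 / 12) ^ (-(1 : ℝ) / 2))) * Real.exp (-(1 * psq x y τ) / (4 * τ)) * (2*(-(1/(4*τ*(1 + τ^2/12))))*(x 0) + ((y 0 + τ*(x 1 + y 1)/2)/(2*τ*(1 + τ^2/12)))) := by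
    unfold pd
    simp only [Hadv]
    rw [(hq1 (x 1 * ((4 * Real.pi * τ) ^ (-(3 : ℝ) / 2) * (1 + τ ^ 2 / 12) ^ (-(1 : ℝ) / 2))) (-(1/(4*τ*(1 + τ^2/12)))) ((y 0 + τ*(x 1 + y 1)/2)/(2*τ*(1 + τ^2/12))) (-(((y 0 + τ*(x 1 + y 1)/2)^2/(1 + τ^2/12) + (x 1 - y 1)^2 + (x 2 - y 2)^2)/(4*τ))) (x 0)).deriv, hv0]
  have hB : HasDerivAt (fun s : ℝ => (4 * Real.pi * s) ^ (-(3 : ℝ) / 2))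
      ((4 * Real.pi) * (-(3:ℝ)/2) * (4 * Real.pi * τ) ^ (-(3:ℝ)/2 - 1)) τ := by
    have h4 : HasDerivAt (fun s : ℝ => 4 * Real.pi * s) (4 * Real.pi) τ := by
      simpa using (hasDerivAt_id τ).const_mul (4 * Real.pi)
    exact h4.rpow_const (Or.inl (ne_of_gt h4πτ))
  have hC : HasDerivAt (fun s : ℝ => (1 + s ^ 2 / 12) ^ (-(1 : ℝ) / 2))
      ((τ/6) * (-(1:ℝ)/2) * (1 + τ^2/12) ^ (-(1:ℝ)/2 - 1)) τ := by
    have hDd : HasDerivAt (fun s : ℝ => 1 + s ^ 2 / 12) (τ/6) τ := by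
      have := ((hasDerivAt_pow 2 τ).div_const 12).const_add 1
      exact this.congr_deriv (by ring)
    exact hDd.rpow_const (Or.inl hD)
  have hpsq : HasDerivAt (fun s : ℝ => psq x y s) ((2*(x 0 - y 0 - τ*(x 1 + y 1)/2)*(-((x 1 + y 1)/2))*(1 + τ^2/12) - (x 0 - y 0 - τ*(x 1 + y 1)/2)^2*(τ/6))/(1 + τ^2/12)^2) τ := by
    simp only [psq]
    have hN : HasDerivAt (fun s : ℝ => x 0 - y 0 - s * (x 1 + y 1) / 2)
        (-((x 1 + y 1)/2)) τ := by
      have := (((hasDerivAt_id τ).mul_const (x 1 + y 1)).div_const 2).const_sub (x 0 - y 0)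
      exact this.congr_deriv (by ring)
    have hDd : HasDerivAt (fun s : ℝ => 1 + s ^ 2 / 12) (τ/6) τ := by
      have := ((hasDerivAt_pow 2 τ).div_const 12).const_add 1
      exact this.congr_deriv (by ring)
    have := (((hN.pow 2).div hDd hD).add_const ((x 1 - y 1)^2)).add_const ((x 2 - y 2)^2)
    exact this.congr_deriv (by simp only [Pi.pow_apply]; ring)
  have hQ : HasDerivAt (fun s : ℝ => -(1 * psq x y s) / (4 * s)) (((-(1*((2*(x 0 - y 0 - τ*(x 1 + y 1)/2)*(-((x 1 + y 1)/2))*(1 + τ^2/12) - (x 0 - y 0 - τ*(x 1 + y 1)/2)^2*(τ/6))/(1 + τ^2/12)^2)))*(4*τ) - (-(1*psq x y τ))*4)/(4*τ)^2) τ := by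
    have hnum : HasDerivAt (fun s : ℝ => -(1 * psq x y s)) (-(1*((2*(x 0 - y 0 - τ*(x 1 + y 1)/2)*(-((x 1 + y 1)/2))*(1 + τ^2/12) - (x 0 - y 0 - τ*(x 1 + y 1)/2)^2*(τ/6))/(1 + τ^2/12)^2))) τ :=
      (hpsq.const_mul 1).neg
    have hden : HasDerivAt (fun s : ℝ => 4 * s) 4 τ := by
      simpa using (hasDerivAt_id τ).const_mul 4
    exact hnum.div hden (by positivity)
  have hE : HasDerivAt (fun s : ℝ => Real.exp (-(1 * psq x y s) / (4 * s)))
      (Real.exp (-(1 * psq x y τ) / (4 * τ)) * (((-(1*((2*(x 0 - y 0 - τ*(x 1 + y 1)/2)*(-((x 1 + y 1)/2))*(1 + τ^2/12) - (x 0 - y 0 - τ*(x 1 + y 1)/2)^2*(τ/6))/(1 + τ^2/12)^2)))*(4*τ) - (-(1*psq x y τ))*4)/(4*τ)^2)) τ := hQ.exp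
  have hTime : HasDerivAt (fun s => G 1 x y s)
      ((((4 * Real.pi) * (-(3:ℝ)/2) * (4 * Real.pi * τ) ^ (-(3:ℝ)/2 - 1)) * (1 + τ ^ 2 / 12) ^ (-(1 : ℝ) / 2)
          + (4 * Real.pi * τ) ^ (-(3 : ℝ) / 2) * ((τ/6) * (-(1:ℝ)/2) * (1 + τ^2/12) ^ (-(1:ℝ)/2 - 1))) * Real.exp (-(1 * psq x y τ) / (4 * τ))
        + ((4 * Real.pi * τ) ^ (-(3 : ℝ) / 2) * (1 + τ ^ 2 / 12) ^ (-(1 : ℝ) / 2)) * (Real.exp (-(1 * psq x y τ) / (4 * τ)) * (((-(1*((2*(x 0 - y 0 - τ*(x 1 + y 1)/2)*(-((x 1 + y 1)/2))*(1 + τ^2/12) - (x 0 - y 0 - τ*(x 1 + y 1)/2)^2*(τ/6))/(1 + τ^2/12)^2)))*(4*τ) - (-(1*psq x y τ))*4)/(4*τ)^2))) τ := (hB.mul hC).mul hE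
  rw [Fin.sum_univ_three, hLap0, hLap1, hLap2, hAdv, hTime.deriv,
    show (4 * Real.pi * τ) ^ (-(3:ℝ)/2 - 1) = (4 * Real.pi * τ) ^ (-(3 : ℝ) / 2) / (4 * Real.pi * τ) from by
      rw [Real.rpow_sub h4πτ, Real.rpow_one],
    show (1 + τ^2/12) ^ (-(1:ℝ)/2 - 1) = (1 + τ ^ 2 / 12) ^ (-(1 : ℝ) / 2) / (1 + τ^2/12) from by
      rw [Real.rpow_sub hD0, Real.rpow_one]]
  simp only [psq]
  field_simp
  ring
end

section
/- On-diagonal singularity subtraction yields an integrable singularity: let G(x,y,τ) be the time-domain fundamental solution of the Smoluchowski shear equation with parameter Pe > 0. For every x ∈ ℝ³ there exists a constant C > 0 such that for all τ ∈ (0, 1], |G(x,x,τ) − (4πτ)^{−3/2}| ≤ C · τ^{−1/2}; in particular, for every τ₀ > 0 the function τ ↦ G(x,x,τ) − (4πτ)^{−3/2} is integrable on (0, τ₀). -/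
open Real MeasureTheory

lemma psq_diag (x : Fin 3 → ℝ) (τ : ℝ) :
    psq x x τ = τ ^ 2 * (x 1) ^ 2 / (1 + τ ^ 2 / 12) := by
  unfold psq; ring

lemma smol_key (Pe : ℝ) (hPe : 0 < Pe) (x : Fin 3 → ℝ) (τ : ℝ)
    (hτ0 : 0 < τ) (hτ1 : τ ≤ 1) :
    |G Pe x x τ - (4 * Real.pi * τ) ^ (-(3 : ℝ) / 2)| ≤
      ((4 * Real.pi) ^ (-(3 : ℝ) / 2) * (1 / 24 + Pe * (x 1) ^ 2 / 4)) *
        τ ^ (-(1 : ℝ) / 2) := by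
  have h4pi : (0 : ℝ) < 4 * Real.pi := by positivity
  set A : ℝ := (4 * Real.pi * τ) ^ (-(3 : ℝ) / 2) with hA
  have hApos : 0 < A := Real.rpow_pos_of_pos (by positivity) _
  set u : ℝ := 1 + τ ^ 2 / 12 with hu
  have hu1 : (1 : ℝ) ≤ u := by rw [hu]; nlinarith [sq_nonneg τ]
  have hu0 : (0 : ℝ) < u := by linarith
  set B : ℝ := u ^ (-(1 : ℝ) / 2) with hB
  have hB1 : B ≤ 1 := Real.rpow_le_one_of_one_le_of_nonpos hu1 (by norm_num)
  have hB0 : 0 < B := Real.rpow_pos_of_pos hu0 _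
  have hlog : Real.log u ≤ τ ^ 2 / 12 := by
    have := Real.log_le_sub_one_of_pos hu0
    rw [hu] at this ⊢
    linarith
  have hBlow : 1 - τ ^ 2 / 24 ≤ B := by
    rw [hB, Real.rpow_def_of_pos hu0]
    have h1 : Real.log u * (-(1 : ℝ) / 2) + 1 ≤ Real.exp (Real.log u * (-(1 : ℝ) / 2)) :=
      Real.add_one_le_exp _
    have hlog0 : 0 ≤ Real.log u := Real.log_nonneg hu1
    nlinarith
  set s : ℝ := Pe * psq x x τ / (4 * τ) with hs
  have hs0 : 0 ≤ s := by
    rw [hs, psq_diag]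
    have : 0 ≤ τ ^ 2 * (x 1) ^ 2 / (1 + τ ^ 2 / 12) := by positivity
    positivity
  have hsle : s ≤ Pe * (x 1) ^ 2 * τ / 4 := by
    rw [hs, psq_diag]
    rw [div_le_div_iff₀ (by positivity) (by norm_num)]
    have hd : τ ^ 2 * (x 1) ^ 2 / (1 + τ ^ 2 / 12) ≤ τ ^ 2 * (x 1) ^ 2 :=
      div_le_self (by positivity) (by nlinarith [sq_nonneg τ])
    nlinarith [sq_nonneg (x 1), sq_nonneg τ, mul_nonneg hPe.le (mul_nonneg (sq_nonneg τ) (sq_nonneg (x 1)))]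
  have hE1 : Real.exp (-s) ≤ 1 := Real.exp_le_one_iff.mpr (by linarith)
  have hElow : 1 - s ≤ Real.exp (-s) := by
    have := Real.add_one_le_exp (-s); linarith
  have hEpos : 0 < Real.exp (-s) := Real.exp_pos _
  have hG : G Pe x x τ = A * B * Real.exp (-s) := by
    rw [G, ← hA, ← hu, ← hB, hs, neg_div]
  have hprod : B * Real.exp (-s) ≤ 1 := by nlinarith
  have hdiff : G Pe x x τ - A = A * (B * Real.exp (-s) - 1) := by rw [hG]; ring
  have h1mBE : 1 - B * Real.exp (-s) ≤ τ ^ 2 / 24 + s := by nlinarith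
  have habs : |G Pe x x τ - A| = A * (1 - B * Real.exp (-s)) := by
    rw [hdiff, abs_mul, abs_of_pos hApos, abs_of_nonpos (by linarith)]
    ring
  have hAτ : A * τ = (4 * Real.pi) ^ (-(3 : ℝ) / 2) * τ ^ (-(1 : ℝ) / 2) := by
    rw [hA, Real.mul_rpow h4pi.le hτ0.le, mul_assoc,
      ← Real.rpow_add_one hτ0.ne']
    norm_num
  calc |G Pe x x τ - A| = A * (1 - B * Real.exp (-s)) := habs
    _ ≤ A * (τ ^ 2 / 24 + s) := by
        exact mul_le_mul_of_nonneg_left h1mBE hApos.le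
    _ ≤ A * (τ * (1 / 24 + Pe * (x 1) ^ 2 / 4)) := by
        apply mul_le_mul_of_nonneg_left _ hApos.le
        nlinarith
    _ = (A * τ) * (1 / 24 + Pe * (x 1) ^ 2 / 4) := by ring
    _ = ((4 * Real.pi) ^ (-(3 : ℝ) / 2) * (1 / 24 + Pe * (x 1) ^ 2 / 4)) *
          τ ^ (-(1 : ℝ) / 2) := by rw [hAτ]; ring

lemma smol_cont (Pe : ℝ) (x : Fin 3 → ℝ) :
    ContinuousOn (fun τ : ℝ => G Pe x x τ - (4 * Real.pi * τ) ^ (-(3 : ℝ) / 2))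
      (Set.Ioi (0 : ℝ)) := by
  have hb : ContinuousOn (fun τ : ℝ => (4 * Real.pi * τ) ^ (-(3 : ℝ) / 2))
      (Set.Ioi (0 : ℝ)) := by
    apply ContinuousOn.rpow_const (by fun_prop)
    intro t ht
    exact Or.inl (by have : (0:ℝ) < t := ht; positivity)
  apply ContinuousOn.sub _ hb
  unfold G
  apply ContinuousOn.mul
  · apply ContinuousOn.mul hb
    apply ContinuousOn.rpow_const (by fun_prop)
    intro t ht
    exact Or.inl (by positivity)
  · apply ContinuousOn.rexp
    apply ContinuousOn.div
    · apply ContinuousOn.neg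
      apply ContinuousOn.mul continuousOn_const
      unfold psq
      apply ContinuousOn.add
      apply ContinuousOn.add
      · apply ContinuousOn.div (by fun_prop) (by fun_prop)
        intro t _
        positivity
      · fun_prop
      · fun_prop
    · fun_prop
    · intro t ht
      have : (0:ℝ) < t := ht
      positivity

/-- On-diagonal singularity subtraction yields an integrable singularity:
for `Pe > 0` and every `x`, there is `C > 0` with
`|G(x,x,τ) − (4πτ)^{−3/2}| ≤ C τ^{−1/2}` for `τ ∈ (0,1]`; in particular for
every `τ₀ > 0` the difference is integrable on `(0,τ₀)`. -/
theorem smoluchowski_on_diagonal_singularity_subtraction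
    (Pe : ℝ) (hPe : 0 < Pe) (x : Fin 3 → ℝ) :
    (∃ C : ℝ, 0 < C ∧ ∀ τ ∈ Set.Ioc (0 : ℝ) 1,
        |G Pe x x τ - (4 * Real.pi * τ) ^ (-(3 : ℝ) / 2)| ≤ C * τ ^ (-(1 : ℝ) / 2))
      ∧ ∀ τ₀ : ℝ, 0 < τ₀ →
        IntegrableOn (fun τ : ℝ => G Pe x x τ - (4 * Real.pi * τ) ^ (-(3 : ℝ) / 2))
          (Set.Ioo 0 τ₀) := by
  have h4pi : (0 : ℝ) < 4 * Real.pi := by positivity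
  set C : ℝ := (4 * Real.pi) ^ (-(3 : ℝ) / 2) * (1 / 24 + Pe * (x 1) ^ 2 / 4) with hC
  have hCpos : 0 < C := by
    apply mul_pos (Real.rpow_pos_of_pos h4pi _)
    nlinarith [sq_nonneg (x 1)]
  have key : ∀ τ ∈ Set.Ioc (0 : ℝ) 1,
      |G Pe x x τ - (4 * Real.pi * τ) ^ (-(3 : ℝ) / 2)| ≤ C * τ ^ (-(1 : ℝ) / 2) :=
    fun τ hτ => smol_key Pe hPe x τ hτ.1 hτ.2
  refine ⟨⟨C, hCpos, key⟩, ?_⟩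
  intro τ₀ hτ₀
  set f : ℝ → ℝ := fun τ => G Pe x x τ - (4 * Real.pi * τ) ^ (-(3 : ℝ) / 2) with hf
  have h01 : IntegrableOn f (Set.Ioc 0 1) := by
    have hg : IntegrableOn (fun τ : ℝ => C * τ ^ (-(1 : ℝ) / 2)) (Set.Ioc 0 1) := by
      have h := (intervalIntegral.intervalIntegrable_rpow'
        (show (-1 : ℝ) < -(1:ℝ)/2 by norm_num) (a := 0) (b := 1)).const_mul C
      rwa [intervalIntegrable_iff_integrableOn_Ioc_of_le zero_le_one] at h
    have hmeas : AEStronglyMeasurable f (volume.restrict (Set.Ioc (0:ℝ) 1)) :=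
      ((smol_cont Pe x).mono (fun t ht => ht.1)).aestronglyMeasurable measurableSet_Ioc
    apply Integrable.mono' hg hmeas
    filter_upwards [ae_restrict_mem measurableSet_Ioc] with τ hτ
    rw [Real.norm_eq_abs]
    exact key τ hτ
  have h1M : IntegrableOn f (Set.Icc 1 (max 1 τ₀)) := by
    apply ContinuousOn.integrableOn_Icc
    exact (smol_cont Pe x).mono (fun t ht => lt_of_lt_of_le one_pos ht.1)
  apply (h01.union h1M).mono_set
  intro t ht
  rcases le_or_gt t 1 with h | h
  · exact Or.inl ⟨ht.1, h⟩
  · exact Or.inr ⟨h.le, le_trans ht.2.le (le_max_right _ _)⟩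
end

section
/- Superalgebraic convergence of windowed truncation: fix ω > 0 and c ∈ (0, 1), and let I := ∫₁^∞ e^{−iωt} t^{−3/2} dt and, for L > 1, I_{L,η} := ∫₁^L e^{−iωt} t^{−3/2} η(t, cL, L) dt, where η is the slow-rise windowing function. Then the error I − I_{L,η} tends to 0 faster than any algebraic rate as L → ∞: for every n ∈ ℕ, L^n · |I − I_{L,η}| → 0 as L → ∞. -/
open Real MeasureTheory Filter Topology

/-- Slow-rise windowing function `η(t, τ₀, τ₁)`: equal to `1` for `t ≤ τ₀`,
to `exp(exp(−1/x)/(x−1))` with `x = (t−τ₀)/(τ₁−τ₀)` for `τ₀ < t < τ₁`, and to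
`0` for `t ≥ τ₁`. -/
noncomputable def eta (τ₀ τ₁ t : ℝ) : ℝ :=
  if t ≤ τ₀ then 1
  else if t < τ₁ then
    Real.exp (Real.exp (-1 / ((t - τ₀) / (τ₁ - τ₀))) / ((t - τ₀) / (τ₁ - τ₀) - 1))
  else 0

/-- normalized window -/
noncomputable def etaAux (x : ℝ) : ℝ :=
  if x ≤ 0 then 1 else if x < 1 then Real.exp (Real.exp (-1 / x) / (x - 1)) else 0

lemma eta_eq_etaAux {τ₀ τ₁ : ℝ} (h : τ₀ < τ₁) (t : ℝ) :
    eta τ₀ τ₁ t = etaAux ((t - τ₀) / (τ₁ - τ₀)) := by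
  have hd : (0:ℝ) < τ₁ - τ₀ := sub_pos.2 h
  have h1 : t ≤ τ₀ ↔ (t - τ₀) / (τ₁ - τ₀) ≤ 0 := by
    rw [div_nonpos_iff]
    constructor
    · intro ht; right; constructor <;> linarith
    · rintro (⟨h1, h2⟩ | ⟨h1, h2⟩) <;> linarith
  have h2 : t < τ₁ ↔ (t - τ₀) / (τ₁ - τ₀) < 1 := by
    rw [div_lt_one hd]; constructor <;> intro <;> linarith
  unfold eta etaAux
  by_cases ht : t ≤ τ₀
  · rw [if_pos ht, if_pos (h1.1 ht)]
  · rw [if_neg ht, if_neg (fun hx => ht (h1.2 hx))]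
    by_cases ht2 : t < τ₁
    · rw [if_pos ht2, if_pos (h2.1 ht2)]
    · rw [if_neg ht2, if_neg (fun hx => ht2 (h2.2 hx))]

lemma etaAux_of_nonpos {x : ℝ} (h : x ≤ 0) : etaAux x = 1 := if_pos h

lemma etaAux_of_one_le {x : ℝ} (h : (1:ℝ) ≤ x) : etaAux x = 0 := by
  unfold etaAux
  rw [if_neg (by linarith), if_neg (by linarith)]

lemma etaAux_contDiff : ContDiff ℝ (⊤ : ℕ∞) etaAux := by
  rw [contDiff_iff_contDiffAt]
  intro x
  rcases lt_or_ge x 1 with hx | hx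
  · -- use F = exp (expNegInvGlue x / (x - 1))
    have hsub : ContDiffAt ℝ (⊤ : ℕ∞) (fun y : ℝ => y - 1) x :=
      (contDiff_id.sub contDiff_const).contDiffAt
    have hdiv : ContDiffAt ℝ (⊤ : ℕ∞) (fun y => expNegInvGlue y / (y - 1)) x :=
      ContDiffAt.div ((expNegInvGlue.contDiff (n := (⊤:ℕ∞))).contDiffAt) hsub
        (sub_ne_zero.2 hx.ne)
    have hF : ContDiffAt ℝ (⊤ : ℕ∞) (fun y => Real.exp (expNegInvGlue y / (y - 1))) x :=
      hdiv.exp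
    apply hF.congr_of_eventuallyEq
    filter_upwards [Iio_mem_nhds hx] with y hy
    rcases le_or_gt y 0 with hy0 | hy0
    · rw [etaAux_of_nonpos hy0, expNegInvGlue.zero_of_nonpos hy0, zero_div, Real.exp_zero]
    · unfold etaAux
      rw [if_neg (not_le.2 hy0), if_pos (show y < 1 from hy)]
      congr 2
      simp [expNegInvGlue, not_le.2 hy0, one_div, neg_div]
  · -- x ≥ 1 > 0; use G = expNegInvGlue ((1 - x) * exp x⁻¹)
    have hx0 : (0:ℝ) < x := lt_of_lt_of_le one_pos hx
    have hin : ContDiffAt ℝ (⊤ : ℕ∞) (fun y : ℝ => (1 - y) * Real.exp y⁻¹) x :=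
      (contDiff_const.sub contDiff_id).contDiffAt.mul (contDiffAt_inv ℝ hx0.ne').exp
    have hG : ContDiffAt ℝ (⊤ : ℕ∞) (fun y => expNegInvGlue ((1 - y) * Real.exp y⁻¹)) x :=
      ContDiffAt.comp x (expNegInvGlue.contDiff (n := (⊤:ℕ∞))).contDiffAt hin
    apply hG.congr_of_eventuallyEq
    filter_upwards [Ioi_mem_nhds hx0] with y hy
    rcases lt_or_ge y 1 with hy1 | hy1
    · have hy0 : (0:ℝ) < y := hy
      have harg : (0:ℝ) < (1 - y) * Real.exp y⁻¹ :=
        mul_pos (by linarith) (Real.exp_pos _)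
      unfold etaAux
      rw [if_neg (not_le.2 hy0), if_pos hy1]
      rw [show expNegInvGlue ((1 - y) * Real.exp y⁻¹)
          = Real.exp (-((1 - y) * Real.exp y⁻¹)⁻¹) by
        simp [expNegInvGlue, harg.not_ge]]
      congr 1
      have e2 : (y - 1 : ℝ) ≠ 0 := sub_ne_zero.2 hy1.ne
      have e3 : (1 - y : ℝ) ≠ 0 := sub_ne_zero.2 hy1.ne'
      rw [show (-1:ℝ) / y = -y⁻¹ by rw [neg_div, one_div], mul_inv, Real.exp_neg]
      field_simp
      ring
    · rw [etaAux_of_one_le hy1, expNegInvGlue.zero_of_nonpos]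
      exact mul_nonpos_of_nonpos_of_nonneg (by linarith) (Real.exp_pos _).le

noncomputable def gfun (c s : ℝ) : ℝ := s ^ (-(3:ℝ)/2) * (1 - etaAux ((s - c) / (1 - c)))

variable {c : ℝ}

lemma gfun_eq_zero (hc1 : c < 1) {s : ℝ} (hs : s ≤ c) : gfun c s = 0 := by
  have : (s - c) / (1 - c) ≤ 0 :=
    div_nonpos_iff.2 (Or.inr ⟨by linarith, by linarith⟩)
  simp [gfun, etaAux_of_nonpos this]

lemma gfun_eq_rpow (hc1 : c < 1) {s : ℝ} (hs : 1 ≤ s) : gfun c s = s ^ (-(3:ℝ)/2) := by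
  have : (1:ℝ) ≤ (s - c) / (1 - c) := (le_div_iff₀ (by linarith)).2 (by linarith)
  simp [gfun, etaAux_of_one_le this]

lemma gfun_contDiff (hc0 : 0 < c) (hc1 : c < 1) : ContDiff ℝ (⊤:ℕ∞) (gfun c) := by
  rw [contDiff_iff_contDiffAt]
  intro x
  rcases lt_or_ge x c with hx | hx
  · have h0 : ContDiffAt ℝ (⊤:ℕ∞) (fun _ : ℝ => (0:ℝ)) x := contDiffAt_const
    apply h0.congr_of_eventuallyEq
    filter_upwards [Iio_mem_nhds hx] with y hy
    exact gfun_eq_zero hc1 (le_of_lt hy)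
  · have hx0 : 0 < x := lt_of_lt_of_le hc0 hx
    exact (Real.contDiffAt_rpow_const_of_ne hx0.ne').mul
      (contDiffAt_const.sub (ContDiffAt.comp x etaAux_contDiff.contDiffAt
        (((contDiff_id.sub contDiff_const).div_const _).contDiffAt)))

lemma iteratedDeriv_congr_open {E : Type*} [NormedAddCommGroup E] [NormedSpace ℝ E]
    {f h : ℝ → E} {U : Set ℝ} (hU : IsOpen U) (hfh : Set.EqOn f h U) (k : ℕ) :
    Set.EqOn (iteratedDeriv k f) (iteratedDeriv k h) U := by
  induction k with
  | zero => simpa [iteratedDeriv_zero] using hfh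
  | succ k ih =>
    intro x hx
    rw [iteratedDeriv_succ, iteratedDeriv_succ]
    apply Filter.EventuallyEq.deriv_eq
    filter_upwards [hU.mem_nhds hx] with y hy using ih hy

lemma iteratedDeriv_rpow (p : ℝ) (k : ℕ) :
    ∀ s : ℝ, 0 < s → iteratedDeriv k (fun s : ℝ => s ^ p) s
      = (∏ i ∈ Finset.range k, (p - i)) * s ^ (p - k) := by
  induction k with
  | zero => intro s hs; simp
  | succ k ih =>
    intro s hs
    rw [iteratedDeriv_succ]
    have h1 : iteratedDeriv k (fun s : ℝ => s ^ p)
        =ᶠ[𝓝 s] fun y => (∏ i ∈ Finset.range k, (p - i)) * y ^ (p - k) := by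
      filter_upwards [Ioi_mem_nhds hs] with y hy using ih y hy
    rw [h1.deriv_eq]
    rw [((Real.hasDerivAt_rpow_const (p := p - k) (Or.inl hs.ne')).const_mul
      (∏ i ∈ Finset.range k, (p - i))).deriv]
    rw [Finset.prod_range_succ]
    push_cast
    rw [← sub_sub, mul_assoc]

lemma gfun_iteratedDeriv_on_Ioi (hc1 : c < 1) (k : ℕ) {s : ℝ} (hs : 1 < s) :
    iteratedDeriv k (gfun c) s
      = (∏ i ∈ Finset.range k, (-(3:ℝ)/2 - i)) * s ^ (-(3:ℝ)/2 - k) := by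
  have h1 : Set.EqOn (gfun c) (fun s : ℝ => s ^ (-(3:ℝ)/2)) (Set.Ioi 1) :=
    fun y hy => gfun_eq_rpow hc1 (le_of_lt hy)
  rw [iteratedDeriv_congr_open isOpen_Ioi h1 k hs]
  exact iteratedDeriv_rpow _ k s (lt_trans one_pos hs)

lemma iteratedDeriv_zero_fun {E : Type*} [NormedAddCommGroup E] [NormedSpace ℝ E] (k : ℕ) :
    iteratedDeriv k (fun _ : ℝ => (0:E)) = fun _ => 0 := by
  induction k with
  | zero => simp [iteratedDeriv_zero]
  | succ k ih => rw [iteratedDeriv_succ, ih]; simp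

lemma gfun_iteratedDeriv_zero_on_Iio (hc1 : c < 1) (k : ℕ) {s : ℝ} (hs : s < c) :
    iteratedDeriv k (gfun c) s = 0 := by
  have h1 : Set.EqOn (gfun c) (fun _ : ℝ => (0:ℝ)) (Set.Iio c) :=
    fun y hy => gfun_eq_zero hc1 (le_of_lt hy)
  rw [iteratedDeriv_congr_open isOpen_Iio h1 k hs]
  rw [iteratedDeriv_zero_fun]

lemma gfun_iteratedDeriv_integrable (hc0 : 0 < c) (hc1 : c < 1) (k : ℕ) :
    Integrable (iteratedDeriv k (gfun c)) := by
  have hcont : Continuous (iteratedDeriv k (gfun c)) :=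
    (gfun_contDiff hc0 hc1).continuous_iteratedDeriv k (by exact_mod_cast le_top)
  rw [← integrableOn_univ, show (Set.univ : Set ℝ) = Set.Iic 1 ∪ Set.Ioi 1 by
    simp [Set.Iic_union_Ioi]]
  apply MeasureTheory.IntegrableOn.union
  · apply MeasureTheory.IntegrableOn.mono_set (t := Set.Iio c ∪ Set.Icc c 1)
    · apply MeasureTheory.IntegrableOn.union
      · apply ((integrable_zero _ _ _).integrableOn (s := Set.Iio c)).congr_fun
          (fun x hx => (gfun_iteratedDeriv_zero_on_Iio hc1 k hx).symm) measurableSet_Iio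
      · exact hcont.continuousOn.integrableOn_Icc
    · intro x hx
      rcases lt_or_ge x c with h | h
      · exact Or.inl h
      · exact Or.inr ⟨h, hx⟩
  · have hint : IntegrableOn
        (fun s : ℝ => (∏ i ∈ Finset.range k, (-(3:ℝ)/2 - i)) * s ^ (-(3:ℝ)/2 - k))
        (Set.Ioi 1) := by
      apply Integrable.const_mul
      apply integrableOn_Ioi_rpow_of_lt _ one_pos
      have : (0:ℝ) ≤ k := Nat.cast_nonneg k
      linarith
    exact hint.congr_fun (fun x hx => (gfun_iteratedDeriv_on_Ioi hc1 k hx).symm)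
      measurableSet_Ioi

lemma iteratedDeriv_ofReal {f : ℝ → ℝ} (hf : ContDiff ℝ (⊤:ℕ∞) f) (k : ℕ) :
    iteratedDeriv k (fun s => ((f s : ℝ) : ℂ)) = fun s => ((iteratedDeriv k f s : ℝ) : ℂ) := by
  induction k with
  | zero => simp
  | succ k ih =>
    funext s
    rw [iteratedDeriv_succ, ih, iteratedDeriv_succ]
    exact (((hf.differentiable_iteratedDeriv k (by exact_mod_cast (Ne.lt_top (by simp) : ((k:ℕ∞)) < ⊤))) s).hasDerivAt.ofReal_comp).deriv

lemma fourier_iter {f : ℝ → ℂ} (hf : ContDiff ℝ (⊤:ℕ∞) f)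
    (hint : ∀ k, Integrable (iteratedDeriv k f)) (k : ℕ) (ξ : ℝ) :
    FourierTransform.fourier (iteratedDeriv k f) ξ
      = (2 * π * Complex.I * ξ)^k * FourierTransform.fourier f ξ := by
  induction k with
  | zero => simp [iteratedDeriv_zero]
  | succ k ih =>
    rw [iteratedDeriv_succ,
      congrFun (Real.fourier_deriv (hint k)
        (hf.differentiable_iteratedDeriv k (by exact_mod_cast (Ne.lt_top (by simp) : ((k:ℕ∞)) < ⊤)))
        (by rw [← iteratedDeriv_succ]; exact hint (k+1))) ξ]
    rw [smul_eq_mul, ih, pow_succ]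
    ring

lemma fourier_decay {f : ℝ → ℂ} (hf : ContDiff ℝ (⊤:ℕ∞) f)
    (hint : ∀ k, Integrable (iteratedDeriv k f)) (k : ℕ) (ξ : ℝ) :
    ‖FourierTransform.fourier f ξ‖ * (2*π*|ξ|)^k ≤ ∫ s, ‖iteratedDeriv k f s‖ := by
  have h1 := fourier_iter hf hint k ξ
  have h2 : ‖FourierTransform.fourier (iteratedDeriv k f) ξ‖ ≤ ∫ s, ‖iteratedDeriv k f s‖ :=
    VectorFourier.norm_fourierIntegral_le_integral_norm _ _ _ _ _
  rw [h1] at h2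
  calc ‖FourierTransform.fourier f ξ‖ * (2*π*|ξ|)^k
      = ‖(2 * π * Complex.I * ξ)^k * FourierTransform.fourier f ξ‖ := by
        rw [norm_mul, norm_pow]
        have : ‖(2 * ↑π * Complex.I * ↑ξ : ℂ)‖ = 2 * π * |ξ| := by
          simp [norm_mul, Complex.norm_I, Complex.norm_real, abs_of_pos pi_pos]
        rw [this]; ring
    _ ≤ _ := h2

lemma etaAux_mem (x : ℝ) : etaAux x ∈ Set.Icc (0:ℝ) 1 := by
  unfold etaAux
  split_ifs with h1 h2
  · exact ⟨zero_le_one, le_rfl⟩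
  · constructor
    · exact (Real.exp_pos _).le
    · rw [Real.exp_le_one_iff]
      exact div_nonpos_iff.2 (Or.inl ⟨(Real.exp_pos _).le, by linarith⟩)
  · exact ⟨le_rfl, zero_le_one⟩

lemma phi_integrableOn (ω : ℝ) :
    IntegrableOn (fun t : ℝ => Complex.exp (-(Complex.I * ω * t)) * ((t ^ (-(3:ℝ)/2) : ℝ) : ℂ))
      (Set.Ioi 1) := by
  have hb : IntegrableOn (fun t : ℝ => t ^ (-(3:ℝ)/2)) (Set.Ioi 1) :=
    integrableOn_Ioi_rpow_of_lt (by norm_num) one_pos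
  apply Integrable.mono' hb
  · apply ContinuousOn.aestronglyMeasurable ?_ measurableSet_Ioi
    apply ContinuousOn.mul
    · apply Continuous.continuousOn
      exact Complex.continuous_exp.comp (by continuity)
    · apply Complex.continuous_ofReal.comp_continuousOn
      apply ContinuousOn.rpow_const continuousOn_id
      intro x hx
      exact Or.inl (ne_of_gt (lt_trans one_pos hx))
  · filter_upwards [ae_restrict_mem measurableSet_Ioi] with t ht
    have ht0 : (0:ℝ) < t := lt_trans one_pos ht
    rw [norm_mul]
    have hre : (-(Complex.I * (ω:ℂ) * (t:ℂ))).re = 0 := by simp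
    have h1 : ‖Complex.exp (-(Complex.I * (ω:ℂ) * (t:ℂ)))‖ = 1 := by
      rw [Complex.norm_exp, hre, Real.exp_zero]
    rw [h1, one_mul, Complex.norm_real, Real.norm_eq_abs,
      abs_of_nonneg (Real.rpow_nonneg ht0.le _)]

lemma main_identity (ω : ℝ) {c L : ℝ} (hc0 : 0 < c) (hc1 : c < 1) (hL1 : 1 < L)
    (hcL : 1 < c * L) :
    (∫ t in Set.Ioi (1:ℝ), Complex.exp (-(Complex.I * ω * t)) * ((t ^ (-(3:ℝ)/2) : ℝ) : ℂ))
      - (∫ t in Set.Ioc (1:ℝ) L, Complex.exp (-(Complex.I * ω * t)) * ((t ^ (-(3:ℝ)/2) : ℝ) : ℂ)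
          * ((eta (c*L) L t : ℝ) : ℂ))
    = ((L ^ (-(1:ℝ)/2) : ℝ) : ℂ)
        * FourierTransform.fourier (fun s => ((gfun c s : ℝ) : ℂ)) (ω * L / (2*π)) := by
  have hL0 : 0 < L := lt_trans one_pos hL1
  have hcLL : c * L < L := by nlinarith
  have hLne : (L:ℂ) ≠ 0 := by exact_mod_cast hL0.ne'
  have hφ := phi_integrableOn ω
  have hetacont : Continuous (fun t : ℝ => eta (c*L) L t) := by
    have : (fun t : ℝ => eta (c*L) L t) = fun t => etaAux ((t - c*L) / (L - c*L)) := by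
      funext t; exact eta_eq_etaAux hcLL t
    rw [this]
    exact etaAux_contDiff.continuous.comp (by continuity)
  have hφη : IntegrableOn (fun t : ℝ => Complex.exp (-(Complex.I * ω * t))
      * ((t ^ (-(3:ℝ)/2):ℝ):ℂ) * ((eta (c*L) L t : ℝ):ℂ)) (Set.Ioi 1) := by
    apply Integrable.mono' hφ.norm
    · exact hφ.aestronglyMeasurable.mul
        (Complex.continuous_ofReal.comp hetacont).aestronglyMeasurable
    · filter_upwards with t
      rw [norm_mul]
      apply mul_le_of_le_one_right (norm_nonneg _)
      rw [Complex.norm_real, Real.norm_eq_abs]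
      have := etaAux_mem ((t - c*L) / (L - c*L))
      rw [eta_eq_etaAux hcLL, abs_of_nonneg this.1]
      exact this.2
  have hB : (∫ t in Set.Ioc (1:ℝ) L, Complex.exp (-(Complex.I * ω * t))
        * ((t ^ (-(3:ℝ)/2):ℝ):ℂ) * ((eta (c*L) L t : ℝ):ℂ))
      = ∫ t in Set.Ioi (1:ℝ), Complex.exp (-(Complex.I * ω * t))
        * ((t ^ (-(3:ℝ)/2):ℝ):ℂ) * ((eta (c*L) L t : ℝ):ℂ) := by
    have hsplit : Set.Ioi (1:ℝ) = Set.Ioc 1 L ∪ Set.Ioi L :=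
      (Set.Ioc_union_Ioi_eq_Ioi hL1.le).symm
    have hzero : (∫ t in Set.Ioi L, Complex.exp (-(Complex.I * ω * t))
        * ((t ^ (-(3:ℝ)/2):ℝ):ℂ) * ((eta (c*L) L t : ℝ):ℂ)) = 0 := by
      rw [setIntegral_congr_fun measurableSet_Ioi (g := fun _ => (0:ℂ))]
      · simp
      · intro t ht
        have ht' : (L:ℝ) < t := ht
        have : eta (c*L) L t = 0 := by
          unfold eta
          rw [if_neg (by linarith), if_neg (by linarith)]
        simp [this]
    conv_rhs => rw [hsplit]
    rw [setIntegral_union (Set.Ioc_disjoint_Ioi le_rfl) measurableSet_Ioi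
      (hφη.mono_set (by rw [hsplit]; exact Set.subset_union_left))
      (hφη.mono_set (by rw [hsplit]; exact Set.subset_union_right)), hzero, add_zero]
  rw [hB, ← integral_sub hφ hφη]
  have hpt : Set.EqOn (fun t : ℝ => Complex.exp (-(Complex.I * ω * t)) * ((t ^ (-(3:ℝ)/2):ℝ):ℂ)
        - Complex.exp (-(Complex.I * ω * t)) * ((t ^ (-(3:ℝ)/2):ℝ):ℂ) * ((eta (c*L) L t : ℝ):ℂ))
      (fun t : ℝ => ((L ^ (-(3:ℝ)/2) : ℝ) : ℂ)
        * (Complex.exp (-(Complex.I * ω * t)) * ((gfun c (t/L) : ℝ):ℂ))) (Set.Ioi 1) := by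
    intro t ht
    have ht0 : (0:ℝ) < t := lt_trans one_pos ht
    have key : t ^ (-(3:ℝ)/2) * (1 - eta (c*L) L t) = L ^ (-(3:ℝ)/2) * gfun c (t/L) := by
      rw [eta_eq_etaAux hcLL]
      unfold gfun
      have harg : (t - c*L)/(L - c*L) = (t/L - c)/(1 - c) := by
        rw [div_eq_div_iff (by linarith) (by linarith)]
        field_simp
      rw [harg, Real.div_rpow ht0.le hL0.le]
      have hLr : L ^ (-(3:ℝ)/2) ≠ 0 := (Real.rpow_pos_of_pos hL0 _).ne'
      field_simp
    have key' := congrArg (fun x : ℝ => (x : ℂ)) key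
    push_cast at key'
    simp only
    linear_combination Complex.exp (-(Complex.I * ω * t)) * key'
  rw [setIntegral_congr_fun measurableSet_Ioi hpt, integral_const_mul]
  have hD : (∫ t in Set.Ioi (1:ℝ), Complex.exp (-(Complex.I * ω * t)) * ((gfun c (t/L) : ℝ):ℂ))
      = ∫ t : ℝ, Complex.exp (-(Complex.I * ω * t)) * ((gfun c (t/L) : ℝ):ℂ) := by
    apply setIntegral_eq_integral_of_forall_compl_eq_zero
    intro t ht
    simp only [Set.mem_Ioi, not_lt] at ht
    have : t / L ≤ c := by
      rw [div_le_iff₀ hL0]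
      calc t ≤ 1 := ht
        _ ≤ c * L := hcL.le
    rw [gfun_eq_zero hc1 this]
    simp
  rw [hD]
  have hE : (∫ t : ℝ, Complex.exp (-(Complex.I * ω * t)) * ((gfun c (t/L) : ℝ):ℂ))
      = |L| • ∫ s : ℝ, Complex.exp (-(Complex.I * (ω*L) * s)) * ((gfun c s : ℝ):ℂ) := by
    rw [← MeasureTheory.Measure.integral_comp_inv_mul_left
      (fun s => Complex.exp (-(Complex.I * (ω*L) * s)) * ((gfun c s : ℝ):ℂ)) L]
    apply integral_congr_ae
    filter_upwards with t
    have h1 : L⁻¹ * t = t / L := by rw [inv_mul_eq_div]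
    rw [h1]
    congr 2
    push_cast
    field_simp
  rw [hE]
  have hF : (∫ s : ℝ, Complex.exp (-(Complex.I * (ω*L) * s)) * ((gfun c s : ℝ):ℂ))
      = FourierTransform.fourier (fun s => ((gfun c s : ℝ):ℂ)) (ω * L / (2*π)) := by
    rw [Real.fourier_real_eq_integral_exp_smul]
    apply integral_congr_ae
    filter_upwards with v
    rw [smul_eq_mul]
    congr 1
    have hπ : (π:ℝ) ≠ 0 := pi_ne_zero
    have harg : (-2 * π * v * (ω * L / (2*π)) : ℝ) = -(v * (ω * L)) := by
      field_simp
    rw [harg]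
    push_cast
    ring
  rw [hF, abs_of_pos hL0]
  rw [Complex.real_smul, ← mul_assoc, ← Complex.ofReal_mul]
  congr 2
  rw [show L ^ (-(1:ℝ)/2) = L ^ ((-(3:ℝ)/2) + 1) by norm_num, Real.rpow_add hL0, Real.rpow_one]

/-- Superalgebraic convergence of the windowed truncation: with
`I = ∫₁^∞ e^{−iωt} t^{−3/2} dt` and
`I_{L,η} = ∫₁^L e^{−iωt} t^{−3/2} η(t, cL, L) dt`, for every `n ∈ ℕ`,
`L^n |I − I_{L,η}| → 0` as `L → ∞`. -/
theorem windowed_truncation_superalgebraic_convergence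
    (ω : ℝ) (hω : 0 < ω) (c : ℝ) (hc : c ∈ Set.Ioo (0 : ℝ) 1) (n : ℕ) :
    Tendsto
      (fun L : ℝ =>
        L ^ n *
          ‖(∫ t in Set.Ioi (1 : ℝ),
                Complex.exp (-(Complex.I * ω * t)) * ((t ^ (-(3 : ℝ) / 2) : ℝ) : ℂ))
            - ∫ t in Set.Ioc (1 : ℝ) L,
                Complex.exp (-(Complex.I * ω * t)) * ((t ^ (-(3 : ℝ) / 2) : ℝ) : ℂ)
                  * ((eta (c * L) L t : ℝ) : ℂ)‖)
      atTop (𝓝 0) := by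
  obtain ⟨hc0, hc1⟩ := hc
  have hGsmooth : ContDiff ℝ (⊤:ℕ∞) (fun s => ((gfun c s : ℝ) : ℂ)) :=
    Complex.ofRealCLM.contDiff.comp (gfun_contDiff hc0 hc1)
  have hGint : ∀ k, Integrable (iteratedDeriv k (fun s => ((gfun c s : ℝ) : ℂ))) := by
    intro k
    rw [iteratedDeriv_ofReal (gfun_contDiff hc0 hc1) k]
    exact (gfun_iteratedDeriv_integrable hc0 hc1 k).ofReal
  set C := ∫ s, ‖iteratedDeriv (n+1) (fun s => ((gfun c s : ℝ) : ℂ)) s‖ with hC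
  apply squeeze_zero' (g := fun L : ℝ => (C / ω^(n+1)) * (L ^ (-(1:ℝ)/2) / L))
  · filter_upwards [eventually_gt_atTop 0] with L hL
    positivity
  · filter_upwards [eventually_gt_atTop (max 1 (1/c))] with L hL
    have hL1 : 1 < L := lt_of_le_of_lt (le_max_left _ _) hL
    have hL0 : 0 < L := lt_trans one_pos hL1
    have hcL : 1 < c * L := by
      have h2 : 1/c < L := lt_of_le_of_lt (le_max_right 1 (1/c)) hL
      calc (1:ℝ) = c * (1/c) := by field_simp
        _ < c * L := by exact mul_lt_mul_of_pos_left h2 hc0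
    rw [main_identity ω hc0 hc1 hL1 hcL]
    rw [norm_mul, Complex.norm_real, Real.norm_eq_abs,
      abs_of_nonneg (Real.rpow_nonneg hL0.le _)]
    set ξ := ω * L / (2*π) with hξdef
    have hdecay := fourier_decay hGsmooth hGint (n+1) ξ
    have hξpos : 0 < ξ := by
      apply div_pos (mul_pos hω hL0) (by positivity)
    have hξ : 2*π*|ξ| = ω * L := by
      rw [abs_of_pos hξpos, hξdef]
      field_simp
    rw [hξ] at hdecay
    have hωL : 0 < ω*L := mul_pos hω hL0
    have hbound : ‖FourierTransform.fourier (fun s => ((gfun c s : ℝ) : ℂ)) ξ‖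
        ≤ C / (ω*L)^(n+1) := (le_div_iff₀ (pow_pos hωL _)).2 hdecay
    calc L^n * (L ^ (-(1:ℝ)/2) * ‖FourierTransform.fourier (fun s => ((gfun c s : ℝ) : ℂ)) ξ‖)
        ≤ L^n * (L ^ (-(1:ℝ)/2) * (C / (ω*L)^(n+1))) := by
          apply mul_le_mul_of_nonneg_left
            (mul_le_mul_of_nonneg_left hbound (Real.rpow_nonneg hL0.le _))
            (pow_nonneg hL0.le n)
      _ = (C / ω^(n+1)) * (L ^ (-(1:ℝ)/2) / L) := by
          rw [mul_pow, show L^(n+1) = L^n * L from pow_succ L n]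
          have hLn : (L:ℝ)^n ≠ 0 := pow_ne_zero _ hL0.ne'
          field_simp
  · have h1 : Tendsto (fun L:ℝ => L ^ (-(1:ℝ)/2) * L⁻¹) atTop (𝓝 0) := by
      have ha : Tendsto (fun L:ℝ => L ^ (-(1:ℝ)/2)) atTop (𝓝 0) := by
        rw [show (-(1:ℝ)/2) = -(1/2) by norm_num]
        exact tendsto_rpow_neg_atTop (by norm_num)
      have hb : Tendsto (fun L:ℝ => L⁻¹) atTop (𝓝 (0:ℝ)) := tendsto_inv_atTop_zero
      simpa using ha.mul hb
    have := h1.const_mul (C / ω^(n+1))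
    simpa [div_eq_mul_inv, mul_assoc] using this
end
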